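/- arXiv:1108.2286 — 3 statements merged into one kernel-verified Lean document; each statement's English description precedes it below -/
import Mathlib

section
/- Let φ be a holomorphic automorphism of the unit disk 𝔻 with 1 - (1/2)^n ≤ |φ(0)| < 1 - (1/2)^(n+1). Then |φ'(ζ)| ≥ (1/2)^(n+3) for all ζ ∈ 𝔻, and consequently the image φ(𝔻_{(1/2)^k}) contains the disk of radius (1/2)^(n+k+3) centered at φ(0), for every k ∈ ℕ. -/
/-!
Write `φ ζ = c (ζ - a) / (1 - ā ζ)` with `|c| = 1`, so that `|φ 0| = |a|` and the hypothesis says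
`1 - |a| > 2^-(n+1)`. Since `φ' ζ = c (1 - |a|²) / (1 - ā ζ)²` and `|1 - ā ζ| < 2` on the disc,
`|φ'| ≥ (1 - |a|)/4 > 2^-(n+3)`. For the covering statement `φ` is inverted explicitly: the
preimage of `w` is `(w - φ 0) / (c + ā w)`, and `|c + ā w| ≥ 1 - |a| - |w - φ 0|`.
-/

open ComplexConjugate Metric Set

theorem one_sub_ne_zero_of_norm_lt_one {R : Type*} [NormedRing R] [NormOneClass R] {z : R}
    (h : ‖z‖ < 1) : 1 - z ≠ 0 :=
  sub_ne_zero.mpr fun h1 => h.ne (h1 ▸ norm_one)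

namespace Complex

noncomputable def diskMobius (c a ζ : ℂ) : ℂ := c * ((ζ - a) / (1 - conj a * ζ))

variable {c a : ℂ}

theorem diskMobius_zero : diskMobius c a 0 = -(c * a) := by
  simp [diskMobius]

theorem norm_diskMobius_zero (hc : ‖c‖ = 1) : ‖diskMobius c a 0‖ = ‖a‖ := by
  rw [diskMobius_zero, norm_neg, norm_mul, hc, one_mul]

theorem norm_conj_mul_lt_one (ha : ‖a‖ < 1) {ζ : ℂ} (hζ : ‖ζ‖ ≤ 1) : ‖conj a * ζ‖ < 1 := by
  rw [norm_mul, norm_conj]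
  nlinarith [norm_nonneg a]

theorem one_sub_conj_mul_self (a : ℂ) : 1 - conj a * a = ((1 - ‖a‖ ^ 2 : ℝ) : ℂ) := by
  push_cast
  rw [conj_mul']

theorem hasDerivAt_diskMobius {ζ : ℂ} (h : 1 - conj a * ζ ≠ 0) :
    HasDerivAt (diskMobius c a) (c * (1 - conj a * a) / (1 - conj a * ζ) ^ 2) ζ := by
  have hnum : HasDerivAt (fun z : ℂ => z - a) 1 ζ := (hasDerivAt_id ζ).sub_const a
  have hden : HasDerivAt (fun z : ℂ => 1 - conj a * z) (-(conj a * 1)) ζ :=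
    ((hasDerivAt_id ζ).const_mul (conj a)).const_sub 1
  exact ((hnum.div hden h).const_mul c).congr_deriv (by ring)

theorem one_sub_norm_div_four_le_norm_deriv_diskMobius (hc : ‖c‖ = 1) (ha : ‖a‖ < 1)
    {ζ : ℂ} (hζ : ‖ζ‖ < 1) : (1 - ‖a‖) / 4 ≤ ‖deriv (diskMobius c a) ζ‖ := by
  have hlt := norm_conj_mul_lt_one ha hζ.le
  have hden_pos : 0 < ‖1 - conj a * ζ‖ := norm_pos_iff.mpr (one_sub_ne_zero_of_norm_lt_one hlt)
  have hden_lt : ‖1 - conj a * ζ‖ < 2 := by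
    linarith [norm_sub_le 1 (conj a * ζ), norm_one (α := ℂ)]
  have hsq : 1 - ‖a‖ ≤ 1 - ‖a‖ ^ 2 := by nlinarith [norm_nonneg a]
  rw [(hasDerivAt_diskMobius (one_sub_ne_zero_of_norm_lt_one hlt)).deriv, norm_div, norm_mul, hc,
    one_mul, one_sub_conj_mul_self, norm_real, Real.norm_of_nonneg (by linarith), norm_pow]
  calc (1 - ‖a‖) / 4 ≤ (1 - ‖a‖ ^ 2) / 2 ^ 2 := by norm_num; linarith
    _ ≤ (1 - ‖a‖ ^ 2) / ‖1 - conj a * ζ‖ ^ 2 := by gcongr; linarith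

theorem diskMobius_div_eq {w : ℂ} (hc : c ≠ 0) (ha : 1 - conj a * a ≠ 0)
    (hw : c + conj a * w ≠ 0) :
    diskMobius c a ((w - diskMobius c a 0) / (c + conj a * w)) = w := by
  have hnum : (w - diskMobius c a 0) / (c + conj a * w) - a =
      w * (1 - conj a * a) / (c + conj a * w) := by
    rw [eq_div_iff hw, sub_mul, div_mul_cancel₀ _ hw, diskMobius_zero]; ring
  have hden : 1 - conj a * ((w - diskMobius c a 0) / (c + conj a * w)) =
      c * (1 - conj a * a) / (c + conj a * w) := by
    rw [eq_div_iff hw, sub_mul, mul_assoc, div_mul_cancel₀ _ hw, diskMobius_zero]; ring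
  rw [diskMobius, hnum, hden, div_div_div_cancel_right₀ hw, mul_div_mul_right _ _ ha,
    mul_div_cancel₀ _ hc]

theorem ball_subset_image_diskMobius (hc : ‖c‖ = 1) (ha : ‖a‖ < 1) {r : ℝ}
    (hr : r < 1 - ‖a‖) :
    ball (diskMobius c a 0) r ⊆ diskMobius c a '' ball 0 (r / (1 - ‖a‖ - r)) := by
  intro w hw
  rw [mem_ball, dist_eq] at hw
  set t := ‖w - diskMobius c a 0‖
  have hsplit : c + conj a * w = c * (1 - conj a * a) + conj a * (w - diskMobius c a 0) := by
    rw [diskMobius_zero]; ring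
  have hD : 1 - ‖a‖ - t ≤ ‖c + conj a * w‖ := by
    have htri := norm_sub_norm_le (c * (1 - conj a * a)) (-(conj a * (w - diskMobius c a 0)))
    rw [sub_neg_eq_add, ← hsplit, norm_neg, norm_mul, norm_mul, hc, one_mul, norm_conj,
      one_sub_conj_mul_self, norm_real, Real.norm_of_nonneg (by nlinarith [norm_nonneg a])] at htri
    nlinarith [norm_nonneg a, norm_nonneg (w - diskMobius c a 0)]
  have hD_pos : 0 < ‖c + conj a * w‖ := by linarith
  have h1a : 1 - conj a * a ≠ 0 :=
    one_sub_ne_zero_of_norm_lt_one (norm_conj_mul_lt_one ha ha.le)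
  refine ⟨(w - diskMobius c a 0) / (c + conj a * w), ?_,
    diskMobius_div_eq (norm_ne_zero_iff.mp (hc ▸ one_ne_zero)) h1a (norm_pos_iff.mp hD_pos)⟩
  rw [mem_ball, dist_zero_right, norm_div]
  exact div_lt_div₀ hw (by linarith) ((norm_nonneg _).trans hw.le) (by linarith)

end Complex

theorem stmt_1_general (a : ℂ) (ha : ‖a‖ < 1) (β : ℝ) (n : ℕ) (φ : ℂ → ℂ)
    (hφ : ∀ ζ : ℂ, φ ζ = Complex.exp (β * Complex.I) * ((ζ - a) / (1 - (starRingEnd ℂ) a * ζ)))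
    (h2 : ‖φ 0‖ < 1 - (1 / 2 : ℝ) ^ (n + 1)) :
    (∀ ζ : ℂ, ‖ζ‖ < 1 → (1 / 2 : ℝ) ^ (n + 3) ≤ ‖deriv φ ζ‖) ∧
      ∀ k : ℕ, Metric.ball (φ 0) ((1 / 2 : ℝ) ^ (n + k + 3)) ⊆
        φ '' Metric.ball 0 ((1 / 2 : ℝ) ^ k) := by
  have hc := Complex.norm_exp_ofReal_mul_I β
  obtain rfl : φ = Complex.diskMobius (Complex.exp (β * Complex.I)) a := funext hφ
  have hgap : (1 / 2 : ℝ) ^ (n + 1) < 1 - ‖a‖ := by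
    rw [Complex.norm_diskMobius_zero hc] at h2; linarith
  refine ⟨fun ζ hζ => ?_, fun k => ?_⟩
  · calc (1 / 2 : ℝ) ^ (n + 3) = (1 / 2) ^ (n + 1) / 4 := by ring
      _ ≤ (1 - ‖a‖) / 4 := by gcongr
      _ ≤ _ := Complex.one_sub_norm_div_four_le_norm_deriv_diskMobius hc ha hζ
  · have hr : (1 / 2 : ℝ) ^ (n + k + 3) = (1 / 2) ^ k * (1 / 2) ^ (n + 3) := by ring
    have hr_le : (1 / 2 : ℝ) ^ (n + k + 3) ≤ (1 / 2) ^ (n + 3) :=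
      hr ▸ mul_le_of_le_one_left (by positivity) (pow_le_one₀ (by norm_num) (by norm_num))
    have hmargin : (1 / 2 : ℝ) ^ (n + 3) ≤ 1 - ‖a‖ - (1 / 2) ^ (n + k + 3) := by
      have : (1 / 2 : ℝ) ^ (n + 1) = 4 * (1 / 2) ^ (n + 3) := by ring
      linarith
    refine (Complex.ball_subset_image_diskMobius hc ha (by linarith)).trans
      (image_mono (ball_subset_ball ?_))
    rw [div_le_iff₀ (by linarith)]
    exact hr.trans_le (mul_le_mul_of_nonneg_left hmargin (by positivity))

/-- If `φ` is a holomorphic automorphism of the unit disc with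
`1 - (1/2)^n ≤ |φ(0)| < 1 - (1/2)^(n+1)`, then `|φ'(ζ)| ≥ (1/2)^(n+3)` on `𝔻`, and
consequently `φ(𝔻_{(1/2)^k})` contains the disc of radius `(1/2)^(n+k+3)` about `φ(0)`. -/
theorem stmt_1 (a : ℂ) (ha : ‖a‖ < 1) (β : ℝ) (n : ℕ) (φ : ℂ → ℂ)
    (hφ : ∀ ζ : ℂ, φ ζ = Complex.exp (β * Complex.I) * ((ζ - a) / (1 - (starRingEnd ℂ) a * ζ)))
    (h1 : 1 - (1 / 2 : ℝ) ^ n ≤ ‖φ 0‖)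
    (h2 : ‖φ 0‖ < 1 - (1 / 2 : ℝ) ^ (n + 1)) :
    (∀ ζ : ℂ, ‖ζ‖ < 1 → (1 / 2 : ℝ) ^ (n + 3) ≤ ‖deriv φ ζ‖) ∧
      ∀ k : ℕ, Metric.ball (φ 0) ((1 / 2 : ℝ) ^ (n + k + 3)) ⊆
        φ '' Metric.ball 0 ((1 / 2 : ℝ) ^ k) :=
  stmt_1_general a ha β n φ hφ h2
end

section
/- Let φ be a holomorphic automorphism of the unit disk 𝔻 with 1 - (1/2)^n ≤ |φ(0)| < 1 - (1/2)^(n+1), and let 0 < r < 1. Then |φ(ζ)| ≥ 1 - (1/2)^n · (1 + 2r/(1-r)²) for all ζ with |ζ| ≤ r. -/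
/-!
Since `φ ζ - φ 0 = e^{iβ} ζ (1 - |a|²) / (1 - ā ζ)` and `|1 - ā ζ| ≥ 1 - r` on `|ζ| ≤ r`, the
point `φ ζ` lies within `r (1 - |a|²) / (1 - r)` of `φ 0`, whose modulus is `|a| ≥ 1 - 2⁻ⁿ`.
As `1 - |a|² ≤ 2 (1 - |a|) ≤ 2 · 2⁻ⁿ`, this distance is at most `2⁻ⁿ · 2r / (1 - r)²`.
-/

open Complex ComplexConjugate

lemma norm_exp_ofReal_mul_I_mul (β : ℝ) (z : ℂ) : ‖exp (β * I) * z‖ = ‖z‖ := by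
  rw [norm_mul, norm_exp_ofReal_mul_I, one_mul]

lemma one_sub_conj_mul_ne_zero {a ζ : ℂ} {r : ℝ} (ha : ‖a‖ ≤ 1) (hζ : ‖ζ‖ ≤ r) (hr : r < 1) :
    1 - conj a * ζ ≠ 0 := by
  have : ‖conj a * ζ‖ < 1 := by
    rw [norm_mul, norm_conj]
    nlinarith [norm_nonneg a, norm_nonneg ζ]
  intro h
  rw [sub_eq_zero] at h
  simp [← h] at this

lemma sub_div_one_sub_conj_mul_add (a ζ : ℂ) (h : 1 - conj a * ζ ≠ 0) :
    (ζ - a) / (1 - conj a * ζ) + a = ζ * (1 - (‖a‖ : ℂ) ^ 2) / (1 - conj a * ζ) := by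
  rw [← mul_conj', div_add' _ _ _ h]
  ring

lemma norm_sub_div_one_sub_conj_mul_add_le {a ζ : ℂ} {r : ℝ} (ha : ‖a‖ ≤ 1) (hζ : ‖ζ‖ ≤ r)
    (hr : r < 1) :
    ‖(ζ - a) / (1 - conj a * ζ) + a‖ ≤ r * (1 - ‖a‖ ^ 2) / (1 - r) := by
  have hden : 1 - r ≤ ‖1 - conj a * ζ‖ := by
    have := norm_sub_norm_le 1 (conj a * ζ)
    rw [norm_one, norm_mul, norm_conj] at this
    nlinarith [norm_nonneg a, norm_nonneg ζ]
  have hnum : 0 ≤ 1 - ‖a‖ ^ 2 := by nlinarith [norm_nonneg a]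
  have hnum' : ‖1 - (‖a‖ : ℂ) ^ 2‖ = 1 - ‖a‖ ^ 2 := by
    rw [← ofReal_pow, ← ofReal_one, ← ofReal_sub, norm_real, Real.norm_of_nonneg hnum]
  rw [sub_div_one_sub_conj_mul_add a ζ (one_sub_conj_mul_ne_zero ha hζ hr), norm_div, norm_mul,
    hnum']
  have hr0 : 0 ≤ r := (norm_nonneg ζ).trans hζ
  gcongr

lemma norm_sub_le_norm_sub_div_one_sub_conj_mul {a ζ : ℂ} {r : ℝ} (ha : ‖a‖ ≤ 1)
    (hζ : ‖ζ‖ ≤ r) (hr : r < 1) :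
    ‖a‖ - r * (1 - ‖a‖ ^ 2) / (1 - r) ≤ ‖(ζ - a) / (1 - conj a * ζ)‖ := by
  have := norm_sub_div_one_sub_conj_mul_add_le ha hζ hr
  linarith [norm_le_add_norm_add' ((ζ - a) / (1 - conj a * ζ)) a]

lemma one_sub_mul_one_add_le {p A r : ℝ} (hA : 1 - p ≤ A) (hA1 : A ≤ 1)
    (hr0 : 0 ≤ r) (hr1 : r < 1) :
    1 - p * (1 + 2 * r / (1 - r) ^ 2) ≤ A - r * (1 - A ^ 2) / (1 - r) := by
  have h1r : 0 < 1 - r := by linarith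
  have hp : 0 ≤ p := by linarith
  have hfactor : 1 - A ^ 2 ≤ 2 * p := by nlinarith [sq_nonneg (1 - A)]
  have hsq : (1 - r) ^ 2 ≤ 1 - r := by nlinarith
  have : r * (1 - A ^ 2) / (1 - r) ≤ p * (2 * r / (1 - r) ^ 2) :=
    calc r * (1 - A ^ 2) / (1 - r) ≤ r * (2 * p) / (1 - r) := by gcongr
      _ ≤ r * (2 * p) / (1 - r) ^ 2 := by gcongr
      _ = p * (2 * r / (1 - r) ^ 2) := by ring
  linarith

theorem stmt_4_general (a : ℂ) (ha : ‖a‖ < 1) (β : ℝ) (n : ℕ) (φ : ℂ → ℂ)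
    (hφ : ∀ ζ : ℂ, φ ζ = Complex.exp (β * Complex.I) * ((ζ - a) / (1 - (starRingEnd ℂ) a * ζ)))
    (h1 : 1 - (1 / 2 : ℝ) ^ n ≤ ‖φ 0‖)
    (r : ℝ) (hr1 : r < 1) :
    ∀ ζ : ℂ, ‖ζ‖ ≤ r →
      1 - (1 / 2 : ℝ) ^ n * (1 + 2 * r / (1 - r) ^ 2) ≤ ‖φ ζ‖ := by
  intro ζ hζ
  have hφ0 : ‖φ 0‖ = ‖a‖ := by simp [hφ]
  rw [hφ, norm_exp_ofReal_mul_I_mul]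
  exact (one_sub_mul_one_add_le (hφ0 ▸ h1) ha.le ((norm_nonneg ζ).trans hζ)
    hr1).trans (norm_sub_le_norm_sub_div_one_sub_conj_mul ha.le hζ hr1)

/-- If `φ` is a holomorphic automorphism of the unit disc with
`1 - (1/2)^n ≤ |φ(0)| < 1 - (1/2)^(n+1)` and `0 < r < 1`, then
`|φ(ζ)| ≥ 1 - (1/2)^n · (1 + 2r/(1-r)²)` for `|ζ| ≤ r`. -/
theorem stmt_4 (a : ℂ) (ha : ‖a‖ < 1) (β : ℝ) (n : ℕ) (φ : ℂ → ℂ)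
    (hφ : ∀ ζ : ℂ, φ ζ = Complex.exp (β * Complex.I) * ((ζ - a) / (1 - (starRingEnd ℂ) a * ζ)))
    (h1 : 1 - (1 / 2 : ℝ) ^ n ≤ ‖φ 0‖)
    (h2 : ‖φ 0‖ < 1 - (1 / 2 : ℝ) ^ (n + 1))
    (r : ℝ) (hr0 : 0 < r) (hr1 : r < 1) :
    ∀ ζ : ℂ, ‖ζ‖ ≤ r →
      1 - (1 / 2 : ℝ) ^ n * (1 + 2 * r / (1 - r) ^ 2) ≤ ‖φ ζ‖ :=
  stmt_4_general a ha β n φ hφ h1 r hr1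
end

section
/- For every r > 0 there exists a constant c > 0 such that the following holds for all n ∈ ℕ: if E is a subset of the annulus A_n = {ζ ∈ 𝔻 : 1 - (1/2)^n ≤ |ζ| < 1 - (1/2)^(n+1)} such that any two distinct points of E have Poincaré distance at least r, then E has at most c·2^n elements. -/
/-!
If `r ≤ d_P(z, w)` then the pseudo-hyperbolic distance `|z - w| / |1 - w̄ z|` is at least
`tanh r`, and `|1 - w̄ z| ≥ 1 - |w| > 2^{-(n+1)}` on `A_n`, so the points of `E` are Euclidean
`tanh r · 2^{-(n+1)}`-separated. The disjoint discs of half that radius around them fit in an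
annulus of width `O(2^{-n})`, whose area `O(2^{-n})` bounds their number by `O(2^n / tanh² r)`.
-/

/-- The Poincaré distance on the unit disc. -/
noncomputable def poincareDist (z w : ℂ) : ℝ :=
  (1 / 2) * Real.log ((1 + ‖(z - w) / (1 - (starRingEnd ℂ) w * z)‖) /
    (1 - ‖(z - w) / (1 - (starRingEnd ℂ) w * z)‖))

/-- The annulus `A_n = {ζ ∈ 𝔻 : 1-(1/2)^n ≤ |ζ| < 1-(1/2)^(n+1)}`. -/
def annA (n : ℕ) : Set ℂ :=
  {ζ : ℂ | 1 - (1 / 2 : ℝ) ^ n ≤ ‖ζ‖ ∧ ‖ζ‖ < 1 - (1 / 2 : ℝ) ^ (n + 1)}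

open MeasureTheory Metric ComplexConjugate

theorem Finset.sum_measureReal_ball_le {X : Type*} [PseudoMetricSpace X] [MeasurableSpace X]
    [OpensMeasurableSpace X] (μ : Measure X) {F : Finset X} {K : Set X} {ρ : ℝ}
    (hsep : (F : Set X).Pairwise fun x y => 2 * ρ ≤ dist x y) (hK : ∀ x ∈ F, ball x ρ ⊆ K)
    (hK_fin : μ K ≠ ⊤) :
    ∑ x ∈ F, μ.real (ball x ρ) ≤ μ.real K := by
  have hdisj : (F : Set X).PairwiseDisjoint (ball · ρ) := fun x hx y hy hxy =>
    ball_disjoint_ball (by linarith [hsep hx hy hxy])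
  rw [← measureReal_biUnion_finset hdisj (fun _ _ => measurableSet_ball)
    fun x hx => measure_ne_top_of_subset (hK x hx) hK_fin]
  exact measureReal_mono (Set.iUnion₂_subset hK) hK_fin

theorem Complex.volume_real_ball (a : ℂ) {r : ℝ} (hr : 0 ≤ r) :
    volume.real (ball a r) = Real.pi * r ^ 2 := by
  simp only [measureReal_def, Complex.volume_ball, ENNReal.toReal_mul, ENNReal.toReal_pow,
    ENNReal.toReal_ofReal hr, ENNReal.coe_toReal, NNReal.coe_real_pi]
  ring

theorem Complex.volume_real_closedBall (a : ℂ) {r : ℝ} (hr : 0 ≤ r) :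
    volume.real (closedBall a r) = Real.pi * r ^ 2 := by
  simp only [measureReal_def, Complex.volume_closedBall, ENNReal.toReal_mul, ENNReal.toReal_pow,
    ENNReal.toReal_ofReal hr, ENNReal.coe_toReal, NNReal.coe_real_pi]
  ring

theorem Complex.volume_real_closedBall_diff_ball_le {A B : ℝ} (hAB : A ≤ B) (hB : 0 ≤ B) :
    volume.real (closedBall (0 : ℂ) B \ ball 0 A) ≤ 2 * Real.pi * B * (B - A) := by
  have hπ := Real.pi_pos
  rcases le_or_gt A 0 with hA | hA
  · rw [ball_eq_empty.mpr hA, Set.sdiff_empty, Complex.volume_real_closedBall 0 hB]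
    nlinarith [mul_nonneg hπ.le (mul_nonneg hB (neg_nonneg.2 hA))]
  · rw [measureReal_sdiff (ball_subset_closedBall.trans (closedBall_subset_closedBall hAB))
      measurableSet_ball measure_closedBall_lt_top.ne,
      Complex.volume_real_closedBall 0 hB, Complex.volume_real_ball 0 hA.le]
    nlinarith [mul_nonneg hπ.le (mul_nonneg (sub_nonneg.2 hAB) (sub_nonneg.2 hAB))]

theorem Set.finite_and_ncard_le_of_forall_finset_card_le {α : Type*} {s : Set α} {c : ℝ}
    (h : ∀ t : Finset α, ↑t ⊆ s → (t.card : ℝ) ≤ c) : s.Finite ∧ (s.ncard : ℝ) ≤ c := by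
  have hfin : s.Finite := by
    by_contra hinf
    obtain ⟨t, hts, ht⟩ := Set.Infinite.exists_subset_card_eq hinf (⌊c⌋₊ + 1)
    have hcard := h t hts
    rw [ht, Nat.cast_add_one] at hcard
    linarith [Nat.lt_floor_add_one c]
  obtain ⟨t, rfl⟩ := hfin.exists_finset_coe
  exact ⟨hfin, by simpa using h t subset_rfl⟩

theorem Finset.card_mul_sq_le_of_pairwise_dist_of_norm_mem_Icc {F : Finset ℂ} {a b ρ : ℝ}
    (hab : a ≤ b) (hb : 0 ≤ b) (hρ : 0 ≤ ρ)
    (hsep : (F : Set ℂ).Pairwise fun x y => 2 * ρ ≤ dist x y)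
    (hF : ∀ x ∈ F, ‖x‖ ∈ Set.Icc a b) :
    F.card * ρ ^ 2 ≤ 2 * (b + ρ) * (b - a + 2 * ρ) := by
  have hballs : ∀ x ∈ F, ball x ρ ⊆ closedBall (0 : ℂ) (b + ρ) \ ball 0 (a - ρ) := by
    intro x hx y hy
    rw [mem_ball] at hy
    have hnorm := abs_le.mp ((abs_norm_sub_norm_le y x).trans (dist_eq_norm y x ▸ hy.le))
    have hxab := hF x hx
    simp only [Set.mem_sdiff, mem_closedBall, mem_ball, dist_zero_right, not_lt]
    constructor <;> linarith [hxab.1, hxab.2]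
  have hpacking := F.sum_measureReal_ball_le volume hsep hballs
    (measure_ne_top_of_subset Set.sdiff_subset measure_closedBall_lt_top.ne)
  have hannulus := Complex.volume_real_closedBall_diff_ball_le (A := a - ρ) (B := b + ρ)
    (by linarith) (by linarith)
  simp only [Complex.volume_real_ball _ hρ, Finset.sum_const, nsmul_eq_mul] at hpacking
  refine le_of_mul_le_mul_left ?_ Real.pi_pos
  linarith [hpacking.trans hannulus]

noncomputable def pseudoHyperbolicDist (z w : ℂ) : ℝ :=
  ‖(z - w) / (1 - conj w * z)‖

theorem pseudoHyperbolicDist_nonneg (z w : ℂ) : 0 ≤ pseudoHyperbolicDist z w := norm_nonneg _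

theorem poincareDist_eq_artanh {z w : ℂ} (h : pseudoHyperbolicDist z w ≤ 1) :
    poincareDist z w = Real.artanh (pseudoHyperbolicDist z w) :=
  (Real.artanh_eq_half_log ⟨by linarith [pseudoHyperbolicDist_nonneg z w], h⟩).symm

theorem one_sub_norm_le_norm_one_sub_conj_mul {z : ℂ} (w : ℂ) (hz : ‖z‖ ≤ 1) :
    1 - ‖w‖ ≤ ‖1 - conj w * z‖ :=
  calc 1 - ‖w‖ ≤ 1 - ‖w‖ * ‖z‖ := by gcongr; exact mul_le_of_le_one_right (norm_nonneg w) hz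
    _ = ‖(1 : ℂ)‖ - ‖conj w * z‖ := by simp
    _ ≤ ‖1 - conj w * z‖ := norm_sub_norm_le _ _

theorem pseudoHyperbolicDist_mul_le_dist {z : ℂ} (w : ℂ) (hz : ‖z‖ ≤ 1) :
    pseudoHyperbolicDist z w * (1 - ‖w‖) ≤ dist z w := by
  calc pseudoHyperbolicDist z w * (1 - ‖w‖)
      ≤ pseudoHyperbolicDist z w * ‖1 - conj w * z‖ :=
        mul_le_mul_of_nonneg_left (one_sub_norm_le_norm_one_sub_conj_mul w hz) (norm_nonneg _)
    _ ≤ dist z w := by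
      rw [pseudoHyperbolicDist, norm_div, dist_eq_norm]
      rcases eq_or_ne ‖1 - conj w * z‖ 0 with h | h
      · simp [h]
      · rw [div_mul_cancel₀ _ h]

theorem tanh_mul_one_sub_norm_le_dist_of_le_poincareDist {z w : ℂ} {r : ℝ} (hz : ‖z‖ ≤ 1)
    (hw : ‖w‖ < 1) (h : r ≤ poincareDist z w) : Real.tanh r * (1 - ‖w‖) ≤ dist z w := by
  by_contra! hlt
  have hlt_tanh : pseudoHyperbolicDist z w < Real.tanh r :=
    lt_of_mul_lt_mul_right ((pseudoHyperbolicDist_mul_le_dist w hz).trans_lt hlt)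
      (by linarith)
  have hlt_artanh := Real.artanh_lt_artanh
    (by linarith [pseudoHyperbolicDist_nonneg z w]) (Real.tanh_lt_one r) hlt_tanh
  rw [Real.artanh_tanh, ← poincareDist_eq_artanh (hlt_tanh.trans (Real.tanh_lt_one r)).le]
    at hlt_artanh
  linarith

theorem Finset.card_le_of_subset_annA {n : ℕ} {δ : ℝ} {F : Finset ℂ} (hδ : 0 < δ)
    (hδ_le : δ ≤ 1) (hF : ↑F ⊆ annA n)
    (hsep : (F : Set ℂ).Pairwise fun x y => δ * (1 / 2) ^ (n + 1) ≤ dist x y) :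
    (F.card : ℝ) ≤ 32 / δ ^ 2 * 2 ^ n := by
  set t : ℝ := (1 / 2) ^ (n + 1) with ht
  have ht_pos : 0 < t := by positivity
  have ht_le : t ≤ 1 / 2 := pow_le_of_le_one (by norm_num) (by norm_num) n.succ_ne_zero |>.trans
    (by norm_num)
  have ht_inv : 2 ^ n * t = 1 / 2 := by rw [ht, pow_succ, ← mul_assoc, ← mul_pow]; norm_num
  have ht_two : (1 / 2 : ℝ) ^ n = 2 * t := by rw [ht, pow_succ]; ring
  have hF' : ∀ x ∈ F, ‖x‖ ∈ Set.Icc (1 - 2 * t) (1 - t) := fun x hx =>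
    ⟨ht_two ▸ (hF hx).1, (hF hx).2.le⟩
  have hpacking := F.card_mul_sq_le_of_pairwise_dist_of_norm_mem_Icc (ρ := δ * t / 2)
    (by linarith) (by linarith) (by positivity) (by simpa [mul_div_cancel₀] using hsep) hF'
  have hδt : δ * t ≤ t := mul_le_of_le_one_left ht_pos.le hδ_le
  have hwidth : 1 - t - (1 - 2 * t) + 2 * (δ * t / 2) ≤ 2 * t := by linarith
  have hradius : 1 - t + δ * t / 2 ≤ 1 := by linarith
  have hcard : (F.card : ℝ) * δ ^ 2 * t ≤ 16 := by
    have hsq : (F.card : ℝ) * (δ * t / 2) ^ 2 ≤ 4 * t := by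
      nlinarith [mul_le_mul hradius hwidth (by nlinarith) zero_le_one]
    nlinarith
  rw [div_mul_eq_mul_div, le_div_iff₀ (by positivity)]
  nlinarith

/-- For every `r > 0` there is `c > 0` such that for all `n`, any subset `E` of
the annulus `A_n` whose distinct points have pairwise Poincaré distance at least `r` has at
most `c·2^n` elements. -/
theorem stmt_6 (r : ℝ) (hr : 0 < r) :
    ∃ c : ℝ, 0 < c ∧
      ∀ (n : ℕ) (E : Set ℂ), E ⊆ annA n →
        (∀ e₁ ∈ E, ∀ e₂ ∈ E, e₁ ≠ e₂ → r ≤ poincareDist e₁ e₂) →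
        E.Finite ∧ (E.ncard : ℝ) ≤ c * 2 ^ n := by
  have htanh_pos : 0 < Real.tanh r := by
    rw [Real.tanh_eq_sinh_div_cosh]
    exact div_pos (Real.sinh_pos_iff.mpr hr) (Real.cosh_pos r)
  refine ⟨32 / Real.tanh r ^ 2, by positivity, fun n E hE hE_sep => ?_⟩
  have hgap : ∀ ζ ∈ E, (1 / 2 : ℝ) ^ (n + 1) < 1 - ‖ζ‖ := fun ζ hζ => by linarith [(hE hζ).2]
  have hdist : E.Pairwise fun x y => Real.tanh r * (1 / 2) ^ (n + 1) ≤ dist x y := by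
    intro x hx y hy hxy
    have hx_le : ‖x‖ ≤ 1 := by linarith [hgap x hx, pow_pos (one_half_pos (α := ℝ)) (n + 1)]
    have hy_lt : ‖y‖ < 1 := by linarith [hgap y hy, pow_pos (one_half_pos (α := ℝ)) (n + 1)]
    calc Real.tanh r * (1 / 2) ^ (n + 1) ≤ Real.tanh r * (1 - ‖y‖) := by
          gcongr; exact (hgap y hy).le
      _ ≤ dist x y :=
          tanh_mul_one_sub_norm_le_dist_of_le_poincareDist hx_le hy_lt (hE_sep x hx y hy hxy)
  exact Set.finite_and_ncard_le_of_forall_finset_card_le fun F hF =>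
    F.card_le_of_subset_annA htanh_pos (Real.tanh_lt_one r).le (hF.trans hE) (hdist.mono hF)
end
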